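/- arXiv:2101.06971 — 7 statements merged into one kernel-verified Lean document; each statement's English description precedes it below -/
import Mathlib

section
/- With $D_d^{(m)} = p^{n-1}(S_d^{(m)} - (p-1)\sum_{l=m+1}^{n-1} p^{m-l}S_d^{(l)}) \in \mathbb{Q}$, for every $0 \leq m \leq n-1$ one has $\sum_{l=m}^{n-1} p^l D_d^{(l)} \geq p^{2(n-1)} S_d^{(n-1)}$; in particular each $D_d^{(m)} \cdot p^m$ sum is nonnegative, and $D_d^{(n-1)} = p^{n-1} S_d^{(n-1)} \geq 0$. -/
/-- Sum of the `(m+1)`-th base-`p` digits of `0, 1, ..., d-1`. -/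
def digitSum (p d m : ℕ) : ℕ := ∑ i ∈ Finset.range d, i / p ^ m % p

/-- The invariant `D_d^{(m)} = p^{n-1}(S_d^{(m)} - (p-1) ∑_{l=m+1}^{n-1} p^{m-l} S_d^{(l)})`. -/
def Dinv (p n d m : ℕ) : ℚ :=
  (p : ℚ) ^ (n - 1) * ((digitSum p d m : ℚ) -
    ((p : ℚ) - 1) * ∑ l ∈ Finset.Icc (m + 1) (n - 1),
      (p : ℚ) ^ ((m : ℤ) - (l : ℤ)) * (digitSum p d l : ℚ))

/-- Swap the `m`-th and `(m+1)`-th base-`p` digits of `i`. -/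
def dswap (p m i : ℕ) : ℕ :=
  i % p ^ m + (i / p ^ (m + 1) % p) * p ^ m + (i / p ^ m % p) * p ^ (m + 1)
    + i / p ^ (m + 2) * p ^ (m + 2)

lemma decomp (p m i : ℕ) :
    i = i % p ^ m + (i / p ^ m % p) * p ^ m + (i / p ^ (m + 1) % p) * p ^ (m + 1)
      + i / p ^ (m + 2) * p ^ (m + 2) := by
  have h1 := Nat.mod_add_div i (p ^ m)
  have h2 := Nat.mod_add_div (i / p ^ m) p
  have h3 := Nat.mod_add_div (i / p ^ (m + 1)) p
  have e1 : i / p ^ m / p = i / p ^ (m + 1) := by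
    rw [Nat.div_div_eq_div_mul, ← pow_succ]
  have e2 : i / p ^ (m + 1) / p = i / p ^ (m + 2) := by
    rw [Nat.div_div_eq_div_mul, ← pow_succ]
  rw [e1] at h2
  rw [e2] at h3
  have P1 : p ^ (m + 1) = p ^ m * p := pow_succ p m
  have P2 : p ^ (m + 2) = p ^ m * p * p := by rw [pow_succ, pow_succ]
  calc i = i % p ^ m + p ^ m * (i / p ^ m) := by omega
    _ = i % p ^ m + p ^ m * (i / p ^ m % p + p * (i / p ^ (m + 1))) := by rw [h2]
    _ = i % p ^ m + p ^ m * (i / p ^ m % p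
          + p * (i / p ^ (m + 1) % p + p * (i / p ^ (m + 2)))) := by rw [h3]
    _ = _ := by rw [P1, P2]; ring

lemma digits_lemma (p m a b c e : ℕ) (ha : a < p ^ m) (hb : b < p) (hc : c < p) :
    (a + b * p ^ m + c * p ^ (m + 1) + e * p ^ (m + 2)) % p ^ m = a ∧
    (a + b * p ^ m + c * p ^ (m + 1) + e * p ^ (m + 2)) / p ^ m % p = b ∧
    (a + b * p ^ m + c * p ^ (m + 1) + e * p ^ (m + 2)) / p ^ (m + 1) % p = c ∧
    (a + b * p ^ m + c * p ^ (m + 1) + e * p ^ (m + 2)) / p ^ (m + 2) = e := by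
  have hq : 0 < p ^ m := lt_of_le_of_lt (Nat.zero_le a) ha
  have hp : 0 < p := lt_of_le_of_lt (Nat.zero_le b) hb
  have hN : a + b * p ^ m + c * p ^ (m + 1) + e * p ^ (m + 2)
      = a + p ^ m * (b + p * (c + p * e)) := by
    rw [pow_succ, pow_succ, pow_succ]; ring
  have d1 : (a + b * p ^ m + c * p ^ (m + 1) + e * p ^ (m + 2)) / p ^ m
      = b + p * (c + p * e) := by
    rw [hN, Nat.add_mul_div_left _ _ hq, Nat.div_eq_of_lt ha, zero_add]
  have d2 : (a + b * p ^ m + c * p ^ (m + 1) + e * p ^ (m + 2)) / p ^ (m + 1)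
      = c + p * e := by
    have hdd : (a + b * p ^ m + c * p ^ (m + 1) + e * p ^ (m + 2)) / p ^ m / p
        = (a + b * p ^ m + c * p ^ (m + 1) + e * p ^ (m + 2)) / p ^ (m + 1) := by
      rw [Nat.div_div_eq_div_mul, ← pow_succ]
    rw [← hdd, d1, Nat.add_mul_div_left _ _ hp, Nat.div_eq_of_lt hb, zero_add]
  have d3 : (a + b * p ^ m + c * p ^ (m + 1) + e * p ^ (m + 2)) / p ^ (m + 2) = e := by
    have hdd : (a + b * p ^ m + c * p ^ (m + 1) + e * p ^ (m + 2)) / p ^ (m + 1) / p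
        = (a + b * p ^ m + c * p ^ (m + 1) + e * p ^ (m + 2)) / p ^ (m + 2) := by
      rw [Nat.div_div_eq_div_mul, ← pow_succ]
    rw [← hdd, d2, Nat.add_mul_div_left _ _ hp, Nat.div_eq_of_lt hc, zero_add]
  refine ⟨?_, ?_, ?_, d3⟩
  · rw [hN, Nat.add_mul_mod_self_left, Nat.mod_eq_of_lt ha]
  · rw [d1, Nat.add_mul_mod_self_left, Nat.mod_eq_of_lt hb]
  · rw [d2, Nat.add_mul_mod_self_left, Nat.mod_eq_of_lt hc]

lemma dswap_digits (p m i : ℕ) (hp : 0 < p) :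
    dswap p m i % p ^ m = i % p ^ m ∧
    dswap p m i / p ^ m % p = i / p ^ (m + 1) % p ∧
    dswap p m i / p ^ (m + 1) % p = i / p ^ m % p ∧
    dswap p m i / p ^ (m + 2) = i / p ^ (m + 2) := by
  have ha : i % p ^ m < p ^ m := Nat.mod_lt _ (pow_pos hp m)
  have hb : i / p ^ (m + 1) % p < p := Nat.mod_lt _ hp
  have hc : i / p ^ m % p < p := Nat.mod_lt _ hp
  exact digits_lemma p m (i % p ^ m) (i / p ^ (m + 1) % p) (i / p ^ m % p)
    (i / p ^ (m + 2)) ha hb hc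

lemma dswap_dswap (p m i : ℕ) (hp : 0 < p) : dswap p m (dswap p m i) = i := by
  obtain ⟨h0, h1, h2, h3⟩ := dswap_digits p m i hp
  conv_rhs => rw [decomp p m i]
  rw [show dswap p m (dswap p m i) = dswap p m i % p ^ m
      + (dswap p m i / p ^ (m + 1) % p) * p ^ m
      + (dswap p m i / p ^ m % p) * p ^ (m + 1)
      + dswap p m i / p ^ (m + 2) * p ^ (m + 2) from rfl, h0, h1, h2, h3]

lemma dswap_lt (p m i : ℕ) (h : i / p ^ m % p < i / p ^ (m + 1) % p) :
    dswap p m i < i := by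
  rcases Nat.eq_zero_or_pos p with rfl | hp
  · simp [Nat.zero_pow] at h
  have hc : i / p ^ (m + 1) % p < p := Nat.mod_lt _ hp
  have hp1 : 1 < p := by omega
  have hq : p ^ m < p ^ (m + 1) := Nat.pow_lt_pow_succ hp1
  have hi := decomp p m i
  unfold dswap
  nlinarith [h, hq, hi]

theorem digitSum_succ_le (p d m : ℕ) : digitSum p d (m + 1) ≤ digitSum p d m := by
  rcases Nat.eq_zero_or_pos p with rfl | hp
  · have : digitSum 0 d (m + 1) = 0 := by
      unfold digitSum
      apply Finset.sum_eq_zero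
      intro i _
      simp [Nat.zero_pow]
    simp [this]
  unfold digitSum
  set f : ℕ → ℕ := fun i => i / p ^ m % p with hf
  set g : ℕ → ℕ := fun i => i / p ^ (m + 1) % p with hg
  set A := (Finset.range d).filter (fun i => f i < g i) with hA
  set C := (Finset.range d).filter (fun i => ¬ f i < g i) with hC
  have hsg : ∑ i ∈ Finset.range d, g i = ∑ i ∈ A, g i + ∑ i ∈ C, g i :=
    (Finset.sum_filter_add_sum_filter_not _ _ _).symm
  have hsf : ∑ i ∈ Finset.range d, f i = ∑ i ∈ A, f i + ∑ i ∈ C, f i :=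
    (Finset.sum_filter_add_sum_filter_not _ _ _).symm
  have key1 : ∑ i ∈ A, g i = ∑ i ∈ A, f i + ∑ i ∈ A, (g i - f i) := by
    rw [← Finset.sum_add_distrib]
    apply Finset.sum_congr rfl
    intro i hi
    have := (Finset.mem_filter.mp hi).2
    omega
  have key2 : ∑ i ∈ C, f i = ∑ i ∈ C, g i + ∑ i ∈ C, (f i - g i) := by
    rw [← Finset.sum_add_distrib]
    apply Finset.sum_congr rfl
    intro i hi
    have := (Finset.mem_filter.mp hi).2
    omega
  have himg : ∑ i ∈ A, (g i - f i) = ∑ j ∈ A.image (dswap p m), (f j - g j) := by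
    rw [Finset.sum_image (fun x _ y _ hxy => by
      have := congrArg (dswap p m) hxy
      rwa [dswap_dswap p m x hp, dswap_dswap p m y hp] at this)]
    apply Finset.sum_congr rfl
    intro i _
    obtain ⟨_, h1, h2, _⟩ := dswap_digits p m i hp
    simp only [hf, hg]
    rw [h1, h2]
  have hsub : A.image (dswap p m) ⊆ C := by
    intro j hj
    obtain ⟨i, hiA, rfl⟩ := Finset.mem_image.mp hj
    obtain ⟨hir, hifg⟩ := Finset.mem_filter.mp hiA
    have hlt : dswap p m i < i := dswap_lt p m i hifg
    obtain ⟨_, h1, h2, _⟩ := dswap_digits p m i hp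
    rw [hC, Finset.mem_filter]
    constructor
    · exact Finset.mem_range.mpr (lt_trans hlt (Finset.mem_range.mp hir))
    · simp only [hf, hg]
      rw [h1, h2]
      simp only [hf, hg] at hifg
      omega
  have hle : ∑ j ∈ A.image (dswap p m), (f j - g j) ≤ ∑ j ∈ C, (f j - g j) :=
    Finset.sum_le_sum_of_subset hsub
  show ∑ i ∈ Finset.range d, g i ≤ ∑ i ∈ Finset.range d, f i
  rw [hsg, hsf, key1, key2]
  omega

lemma Dinv_last (p n d : ℕ) (hn : 1 ≤ n) :
    Dinv p n d (n - 1) = (p : ℚ) ^ (n - 1) * (digitSum p d (n - 1) : ℚ) := by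
  unfold Dinv
  rw [show Finset.Icc (n - 1 + 1) (n - 1) = ∅ from Finset.Icc_eq_empty (by omega)]
  simp

lemma Dinv_rec (p n d m : ℕ) (hp : 2 ≤ p) (h : m + 1 ≤ n - 1) :
    Dinv p n d m = (p : ℚ) ^ (n - 1) * ((digitSum p d m : ℚ) - (digitSum p d (m + 1) : ℚ))
      + Dinv p n d (m + 1) / p := by
  have hp0 : (p : ℚ) ≠ 0 := by positivity
  have hsplit : Finset.Icc (m + 1) (n - 1) = insert (m + 1) (Finset.Icc (m + 2) (n - 1)) := by
    ext x
    simp only [Finset.mem_Icc, Finset.mem_insert]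
    omega
  unfold Dinv
  rw [hsplit, Finset.sum_insert (by simp only [Finset.mem_Icc]; omega),
    show (m + 1 + 1) = m + 2 from rfl]
  have he1 : ((m : ℤ) - ((m + 1 : ℕ) : ℤ)) = -1 := by push_cast; ring
  rw [he1, zpow_neg_one]
  have hterm : ∀ l ∈ Finset.Icc (m + 2) (n - 1),
      (p : ℚ) ^ ((m : ℤ) - (l : ℤ)) * (digitSum p d l : ℚ)
      = ((p : ℚ) ^ (((m + 1 : ℕ) : ℤ) - (l : ℤ)) * (digitSum p d l : ℚ)) / p := by
    intro l _
    rw [eq_div_iff hp0, mul_right_comm,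
      show (((m + 1 : ℕ) : ℤ) - (l : ℤ)) = ((m : ℤ) - (l : ℤ)) + 1 from by push_cast; ring,
      zpow_add₀ hp0, zpow_one]
  rw [Finset.sum_congr rfl hterm, ← Finset.sum_div]
  field_simp
  ring

lemma Dinv_nonneg (p n d : ℕ) (hp : 2 ≤ p) (hn : 1 ≤ n) (m : ℕ) (hm : m ≤ n - 1) :
    0 ≤ Dinv p n d m := by
  by_cases hmeq : m = n - 1
  · subst hmeq
    rw [Dinv_last p n d hn]
    positivity
  · have h1 : m + 1 ≤ n - 1 := by omega
    have ih := Dinv_nonneg p n d hp hn (m + 1) h1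
    rw [Dinv_rec p n d m hp h1]
    have hS : digitSum p d (m + 1) ≤ digitSum p d m := digitSum_succ_le p d m
    have hS' : (0 : ℚ) ≤ (digitSum p d m : ℚ) - (digitSum p d (m + 1) : ℚ) := by
      rw [sub_nonneg]
      exact_mod_cast hS
    have hpq : (0 : ℚ) ≤ (p : ℚ) := by positivity
    exact add_nonneg (mul_nonneg (by positivity) hS') (div_nonneg ih hpq)
termination_by n - 1 - m
decreasing_by omega

theorem stmt6 (p n d : ℕ) (hp : 2 ≤ p) (hn : 1 ≤ n) (hd1 : 1 ≤ d) (hd2 : d ≤ p ^ n) :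
    (∀ m ≤ n - 1,
      ∑ l ∈ Finset.Icc m (n - 1), (p : ℚ) ^ l * Dinv p n d l ≥
        (p : ℚ) ^ (2 * (n - 1)) * (digitSum p d (n - 1) : ℚ)) ∧
    Dinv p n d (n - 1) = (p : ℚ) ^ (n - 1) * (digitSum p d (n - 1) : ℚ) ∧
    0 ≤ Dinv p n d (n - 1) := by
  refine ⟨?_, Dinv_last p n d hn, ?_⟩
  · have main : ∀ k m, m ≤ n - 1 → n - 1 - m = k →
        ∑ l ∈ Finset.Icc m (n - 1), (p : ℚ) ^ l * Dinv p n d l ≥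
          (p : ℚ) ^ (2 * (n - 1)) * (digitSum p d (n - 1) : ℚ) := by
      intro k
      induction k with
      | zero =>
        intro m hm hk
        have hm' : m = n - 1 := by omega
        subst hm'
        rw [Finset.Icc_self, Finset.sum_singleton, Dinv_last p n d hn, ← mul_assoc,
          ← pow_add, show n - 1 + (n - 1) = 2 * (n - 1) from by ring]
      | succ k ih =>
        intro m hm hk
        have h1 : m + 1 ≤ n - 1 := by omega
        have hsplit : Finset.Icc m (n - 1) = insert m (Finset.Icc (m + 1) (n - 1)) := by
          ext x
          simp only [Finset.mem_Icc, Finset.mem_insert]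
          omega
        rw [hsplit, Finset.sum_insert (by simp only [Finset.mem_Icc]; omega)]
        have h2 := ih (m + 1) h1 (by omega)
        have h3 : 0 ≤ (p : ℚ) ^ m * Dinv p n d m :=
          mul_nonneg (by positivity) (Dinv_nonneg p n d hp hn m hm)
        linarith
    exact fun m hm => main (n - 1 - m) m hm rfl
  · rw [Dinv_last p n d hn]
    positivity
end

section
/- Let $d = r + qp$ with $0 \leq r < p$. For $1 \leq m \leq n-1$, define $D_{d,n}^{(m)} = p^{n-1}(S_d^{(m)} - (p-1)\sum_{l=m+1}^{n-1}p^{m-l}S_d^{(l)})$ (an $n$-level invariant) and similarly $D_{e,n-1}^{(m-1)} = p^{n-2}(S_e^{(m-1)} - (p-1)\sum_{l=m}^{n-2}p^{m-1-l}S_e^{(l)})$ for the $(n-1)$-level. Then $D_{d,n}^{(m)} = p\big(r\,D_{q+1,n-1}^{(m-1)} + (p-r)\,D_{q,n-1}^{(m-1)}\big)$. -/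
open Finset

theorem Finset.sum_range_mul_add_div {M : Type*} [AddCommMonoid M] (f : ℕ → M) {p : ℕ}
    (hp : 0 < p) (q : ℕ) {r : ℕ} (hr : r ≤ p) :
    ∑ i ∈ range (q * p + r), f (i / p) = p • ∑ a ∈ range q, f a + r • f q := by
  have block (q r : ℕ) (hr : r ≤ p) : ∑ b ∈ range r, f ((q * p + b) / p) = r • f q := by
    rw [sum_congr rfl fun b hb ↦ by
      rw [mul_comm, Nat.mul_add_div hp, Nat.div_eq_of_lt (by grind), add_zero], sum_const,
      card_range]
  rw [sum_range_add, block q r hr]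
  congr 1
  induction q with
  | zero => simp
  | succ q ih => rw [add_one_mul, sum_range_add, ih, block q p le_rfl, sum_range_succ, smul_add]

theorem digitSum_mul_add_succ {p : ℕ} (hp : 0 < p) (q : ℕ) {r : ℕ} (hr : r ≤ p) (m : ℕ) :
    digitSum p (q * p + r) (m + 1) = p * digitSum p q m + r * (q / p ^ m % p) := by
  simp only [digitSum, pow_succ', ← Nat.div_div_eq_div_mul]
  exact sum_range_mul_add_div (fun a ↦ a / p ^ m % p) hp q hr

theorem digitSum_add_one (p d m : ℕ) :
    digitSum p (d + 1) m = digitSum p d m + d / p ^ m % p := sum_range_succ _ _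

theorem digitSum_level_succ {p : ℕ} (hp : 0 < p) (d m : ℕ) :
    (digitSum p d (m + 1) : ℚ) = (d % p : ℕ) * (digitSum p (d / p + 1) m : ℚ)
      + ((p : ℚ) - (d % p : ℕ)) * (digitSum p (d / p) m : ℚ) := by
  conv_lhs => rw [← Nat.div_add_mod' d p]
  rw [digitSum_mul_add_succ hp _ (Nat.mod_lt d hp).le, digitSum_add_one]
  push_cast
  ring

theorem Dinv_succ_succ {p : ℕ} (hp : 0 < p) (n d m : ℕ) :
    Dinv p (n + 2) d (m + 1) = p * ((d % p : ℕ) * Dinv p (n + 1) (d / p + 1) m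
      + (p - (d % p : ℕ) : ℚ) * Dinv p (n + 1) (d / p) m) := by
  have shift : Icc (m + 1 + 1) (n + 1) = (Icc (m + 1) n).map (addRightEmbedding 1) := by
    rw [map_add_right_Icc]
  simp only [Dinv, Nat.add_sub_cancel, show n + 2 - 1 = n + 1 from rfl, shift, sum_map,
    addRightEmbedding_apply, digitSum_level_succ hp, Nat.cast_add, Nat.cast_one,
    add_sub_add_right_eq_sub]
  simp only [mul_add, sum_add_distrib, mul_left_comm _ ((d % p : ℕ) : ℚ),
    mul_left_comm _ ((p : ℚ) - (d % p : ℕ)), ← mul_sum]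
  ring

theorem stmt8_general (p n d m : ℕ) (hp : p.Prime) (hn : 2 ≤ n)
    (hm1 : 1 ≤ m) (r q : ℕ) (hr : r = d % p) (hq : q = d / p) :
    Dinv p n d m =
      p * (r * Dinv p (n - 1) (q + 1) (m - 1) + (p - r : ℚ) * Dinv p (n - 1) q (m - 1)) := by
  obtain ⟨n, rfl⟩ : ∃ k, n = k + 2 := ⟨n - 2, by omega⟩
  obtain ⟨m, rfl⟩ : ∃ k, m = k + 1 := ⟨m - 1, by omega⟩
  subst hr hq
  exact Dinv_succ_succ hp.pos n d m

theorem stmt8 (p n d m : ℕ) (hp : p.Prime) (hn : 2 ≤ n) (hd1 : 1 ≤ d) (hd2 : d ≤ p ^ n)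
    (hm1 : 1 ≤ m) (hm2 : m ≤ n - 1) (r q : ℕ) (hr : r = d % p) (hq : q = d / p) :
    Dinv p n d m =
      p * (r * Dinv p (n - 1) (q + 1) (m - 1) + (p - r : ℚ) * Dinv p (n - 1) q (m - 1)) :=
  stmt8_general p n d m hp hn hm1 r q hr hq
end

section
/- For $d = p - 1 + p^{n-1}$ with $n \geq 2$, one has $S_d^{(0)} = \frac{p^{n-1}(p-1)}{2} + \frac{(p-1)(p-2)}{2}$, $S_d^{(m)} = \frac{p^{n-1}(p-1)}{2}$ for $0 < m < n-1$, and $S_d^{(n-1)} = p - 1$. -/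
lemma digitSum_add_pow (p m X : ℕ) (hp : 0 < p) :
    digitSum p (p ^ (m + 1) + X) m = digitSum p (p ^ (m + 1)) m + digitSum p X m := by
  unfold digitSum
  rw [Finset.sum_range_add]
  congr 1
  apply Finset.sum_congr rfl
  intro i _
  rw [pow_succ, Nat.mul_add_div (pow_pos hp m), Nat.add_comm p, Nat.add_mod_right]

lemma digitSum_blocks (p m : ℕ) (hp : 0 < p) :
    ∀ A X, digitSum p (A * p ^ (m + 1) + X) m
      = A * digitSum p (p ^ (m + 1)) m + digitSum p X m := by
  intro A
  induction A with
  | zero => simp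
  | succ A ih =>
    intro X
    have h : (A + 1) * p ^ (m + 1) + X = p ^ (m + 1) + (A * p ^ (m + 1) + X) := by ring
    rw [h, digitSum_add_pow p m _ hp, ih]
    ring

lemma sum_div_mod (p m : ℕ) (hp : 0 < p) (q : ℕ) :
    ∑ i ∈ Finset.range (q * p ^ m), (i / p ^ m % p) =
      p ^ m * ∑ j ∈ Finset.range q, (j % p) := by
  induction q with
  | zero => simp
  | succ q ih =>
    rw [Nat.succ_mul, Finset.sum_range_add, ih, Finset.sum_range_succ]
    have h : ∀ i ∈ Finset.range (p ^ m), (q * p ^ m + i) / p ^ m % p = q % p := by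
      intro i hi
      rw [Finset.mem_range] at hi
      rw [mul_comm q, Nat.mul_add_div (pow_pos hp m), Nat.div_eq_of_lt hi, add_zero]
    rw [Finset.sum_congr rfl h, Finset.sum_const, Finset.card_range, smul_eq_mul]
    ring

lemma digitSum_period (p m : ℕ) (hp : 0 < p) :
    digitSum p (p ^ (m + 1)) m = p ^ m * ∑ j ∈ Finset.range p, j := by
  unfold digitSum
  rw [pow_succ', sum_div_mod p m hp p]
  congr 1
  apply Finset.sum_congr rfl
  intro j hj
  exact Nat.mod_eq_of_lt (Finset.mem_range.mp hj)

lemma main_calc (p n m : ℕ) (hp : 2 ≤ p) (hmn : m + 1 ≤ n - 1) :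
    digitSum p (p - 1 + p ^ (n - 1)) m
      = p ^ (n - 2) * ∑ j ∈ Finset.range p, j + digitSum p (p - 1) m := by
  have hp0 : 0 < p := by omega
  have hsplit : p ^ (n - 1) = p ^ (n - 2 - m) * p ^ (m + 1) := by
    rw [← pow_add]
    congr 1
    omega
  have he : n - 2 - m + m = n - 2 := by omega
  rw [add_comm, hsplit, digitSum_blocks p m hp0, digitSum_period p m hp0, ← mul_assoc,
    ← pow_add, he]

theorem stmt10 (p n d : ℕ) (hp : 2 ≤ p) (hn : 2 ≤ n) (hd : d = p - 1 + p ^ (n - 1)) :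
    (digitSum p d 0 : ℚ) =
        (p : ℚ) ^ (n - 1) * ((p : ℚ) - 1) / 2 + ((p : ℚ) - 1) * ((p : ℚ) - 2) / 2 ∧
    (∀ m, 0 < m → m < n - 1 →
      (digitSum p d m : ℚ) = (p : ℚ) ^ (n - 1) * ((p : ℚ) - 1) / 2) ∧
    digitSum p d (n - 1) = p - 1 := by
  obtain ⟨k, rfl⟩ : ∃ k, n = k + 2 := ⟨n - 2, by omega⟩
  have hp0 : 0 < p := by omega
  -- Gauss sum in ℚ
  have hgauss : (∑ j ∈ Finset.range p, (j : ℚ)) = (p : ℚ) * ((p : ℚ) - 1) / 2 := by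
    have h2 : (((∑ j ∈ Finset.range p, j) * 2 : ℕ) : ℚ) = ((p * (p - 1) : ℕ) : ℚ) := by
      rw [Finset.sum_range_id_mul_two p]
    push_cast [Nat.cast_sub (by omega : 1 ≤ p)] at h2
    linarith
  have hpow : ((p : ℚ) ^ k) * ((p:ℚ) * ((p:ℚ) - 1) / 2) = (p : ℚ) ^ (k + 1) * ((p:ℚ) - 1) / 2 := by
    rw [pow_succ]
    ring
  refine ⟨?_, ?_, ?_⟩
  · -- m = 0
    have hc := main_calc p (k + 2) 0 hp (by omega)
    have hrem : digitSum p (p - 1) 0 = ∑ i ∈ Finset.range (p - 1), i := by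
      unfold digitSum
      apply Finset.sum_congr rfl
      intro i hi
      rw [Finset.mem_range] at hi
      simp [Nat.mod_eq_of_lt (by omega : i < p), Nat.div_one]
    have hrem2 : (∑ i ∈ Finset.range (p - 1), (i : ℚ))
        = ((p : ℚ) - 1) * ((p : ℚ) - 2) / 2 := by
      have h2 : (((∑ i ∈ Finset.range (p-1), i) * 2 : ℕ) : ℚ) = (((p-1) * (p - 1 - 1) : ℕ) : ℚ) := by
        rw [Finset.sum_range_id_mul_two (p - 1)]
      push_cast [Nat.cast_sub (by omega : 1 ≤ p), Nat.cast_sub (by omega : 1 ≤ p - 1)] at h2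
      linarith
    have h1 : k + 2 - 2 = k := by omega
    rw [hrem, h1] at hc
    have h2 : k + 2 - 1 = k + 1 := by omega
    rw [hd, hc, h2]
    push_cast
    rw [hgauss, hrem2]
    linarith [hpow]
  · -- 0 < m < n - 1
    intro m hm hmn
    have hc := main_calc p (k + 2) m hp (by omega)
    have hrem : digitSum p (p - 1) m = 0 := by
      unfold digitSum
      apply Finset.sum_eq_zero
      intro i hi
      rw [Finset.mem_range] at hi
      have : i < p ^ m := lt_of_lt_of_le (by omega) (Nat.le_self_pow (by omega) p)
      rw [Nat.div_eq_of_lt this, Nat.zero_mod]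
    have h1 : k + 2 - 2 = k := by omega
    rw [hrem, add_zero, h1] at hc
    have h2 : k + 2 - 1 = k + 1 := by omega
    rw [hd, hc, h2]
    push_cast
    rw [hgauss]
    exact hpow
  · -- m = n - 1
    rw [hd]
    unfold digitSum
    rw [add_comm, Finset.sum_range_add]
    have h1 : ∀ i ∈ Finset.range (p ^ (k + 2 - 1)), i / p ^ (k + 2 - 1) % p = 0 := by
      intro i hi
      rw [Finset.mem_range] at hi
      rw [Nat.div_eq_of_lt hi, Nat.zero_mod]
    have h2 : ∀ i ∈ Finset.range (p - 1),
        (p ^ (k + 2 - 1) + i) / p ^ (k + 2 - 1) % p = 1 := by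
      intro i hi
      rw [Finset.mem_range] at hi
      have hpk : 0 < p ^ (k + 2 - 1) := pow_pos hp0 _
      have hlt : i < p ^ (k + 2 - 1) :=
        lt_of_lt_of_le (by omega) (Nat.le_self_pow (by omega) p)
      rw [add_comm, Nat.add_div_right _ hpk, Nat.div_eq_of_lt hlt]
      exact Nat.mod_eq_of_lt (by omega)
    rw [Finset.sum_congr rfl h1, Finset.sum_congr rfl h2, Finset.sum_const_zero,
      Finset.sum_const, Finset.card_range, smul_eq_mul, mul_one, zero_add]
end

section
/- Let $p \geq 2$, $n \geq 1$, and let $c_0,\dots,c_{n-1}$ be real numbers. Consider the linear function $f(u) = \sum_{m=0}^{n-1} c_m u_m$ on the cone $\tilde{\mathcal{U}} = \{u \in \mathbb{R}^n : u_0 \geq 1,\ u_i \geq p\,u_{i-1}\ (1 \leq i \leq n-1)\}$. Then $f$ tends to $-\infty$ on $\tilde{\mathcal{U}}$ as $u_{n-1} \to \infty$ (i.e., for every $M$ there is $T$ such that $f(u) < M$ whenever $u \in \tilde{\mathcal{U}}$ and $u_{n-1} \geq T$) if and only if for every $0 \leq m \leq n-1$ the inequality $\sum_{l=m}^{n-1}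 c_l\, p^{l-(n-1)} < 0$ holds. -/
/-!
Writing `u l = p ^ l * x l`, the cone becomes the set of sequences `x` that are monotone on
`[0, n - 1]` with `x 0 ≥ 1`, and `f u = p ^ (n - 1) * ∑ a l * x l` where
`a l = c l * p ^ l / p ^ (n - 1)`. Summation by parts expresses `∑ a l * x l` as a nonnegative
combination of the tail sums of `a`, weighted by the increments of `x`, whose total is `x (n - 1)`.
If every tail sum is at most `-ε`, then `f u ≤ -ε * u (n - 1)`. If the tail sum from `m` is
nonnegative, the step sequence `x` equal to `1` before `m` and to `s` from `m` on keeps `f u`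
bounded below while `u (n - 1) → ∞`.
-/

open Finset

section SummationByParts

variable {R : Type*} [CommRing R]

def backwardDiff (y : ℕ → R) (m : ℕ) : R := y m - if m = 0 then 0 else y (m - 1)

theorem sum_range_succ_backwardDiff (y : ℕ → R) (l : ℕ) :
    ∑ m ∈ range (l + 1), backwardDiff y m = y l := by
  induction l with
  | zero => simp [backwardDiff]
  | succ l ih => rw [sum_range_succ, ih]; simp [backwardDiff]

theorem sum_range_mul_eq_sum_backwardDiff_mul_sum_Icc (a y : ℕ → R) (N : ℕ) :
    ∑ l ∈ range (N + 1), a l * y l =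
      ∑ m ∈ range (N + 1), backwardDiff y m * ∑ l ∈ Icc m N, a l := by
  calc ∑ l ∈ range (N + 1), a l * y l
        = ∑ l ∈ range (N + 1), ∑ m ∈ range (l + 1), a l * backwardDiff y m :=
          sum_congr rfl fun l _ => by rw [← mul_sum, sum_range_succ_backwardDiff]
    _ = ∑ m ∈ range (N + 1), ∑ l ∈ Icc m N, a l * backwardDiff y m :=
          sum_comm' fun l m => by simp only [mem_range, mem_Icc]; omega
    _ = _ := sum_congr rfl fun m _ => by rw [mul_sum]; exact sum_congr rfl fun _ _ => mul_comm _ _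

end SummationByParts

theorem sum_range_mul_le_of_sum_Icc_le {R : Type*} [CommRing R] [PartialOrder R]
    [IsOrderedRing R] {a y : ℕ → R} {N : ℕ} {ε : R} (hy₀ : 0 ≤ y 0)
    (hy : ∀ i, 1 ≤ i → i ≤ N → y (i - 1) ≤ y i) (ha : ∀ m ≤ N, ∑ l ∈ Icc m N, a l ≤ -ε) :
    ∑ l ∈ range (N + 1), a l * y l ≤ -ε * y N := by
  rw [sum_range_mul_eq_sum_backwardDiff_mul_sum_Icc, ← sum_range_succ_backwardDiff y N, mul_sum]
  refine sum_le_sum fun m hm => ?_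
  have hmN : m ≤ N := Nat.lt_succ_iff.mp (mem_range.mp hm)
  have hd : 0 ≤ backwardDiff y m := by
    rcases Nat.eq_zero_or_pos m with rfl | hm₁
    · simpa [backwardDiff] using hy₀
    · simpa [backwardDiff, hm₁.ne', sub_nonneg] using hy m hm₁ hmN
  calc backwardDiff y m * ∑ l ∈ Icc m N, a l ≤ backwardDiff y m * -ε :=
        mul_le_mul_of_nonneg_left (ha m hmN) hd
    _ = -ε * backwardDiff y m := mul_comm _ _

theorem sum_mul_eq_pow_mul_sum_mul_div_pow {p : ℝ} (hp : p ≠ 0) (c u : ℕ → ℝ) (N : ℕ) :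
    ∑ l ∈ range (N + 1), c l * u l =
      p ^ N * ∑ l ∈ range (N + 1), c l * (p ^ l / p ^ N) * (u l / p ^ l) := by
  rw [mul_sum]
  exact sum_congr rfl fun l _ => by field_simp

theorem sum_mul_le_neg_mul_of_sum_Icc_le {p ε : ℝ} (hp : 0 < p) {c u : ℕ → ℝ} {N : ℕ}
    (hu₀ : 0 ≤ u 0) (hu : ∀ i, 1 ≤ i → i ≤ N → p * u (i - 1) ≤ u i)
    (hc : ∀ m ≤ N, ∑ l ∈ Icc m N, c l * (p ^ l / p ^ N) ≤ -ε) :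
    ∑ l ∈ range (N + 1), c l * u l ≤ -ε * u N := by
  have hx : ∀ i, 1 ≤ i → i ≤ N → u (i - 1) / p ^ (i - 1) ≤ u i / p ^ i := fun i hi₁ hiN =>
    calc u (i - 1) / p ^ (i - 1) = p * u (i - 1) / p ^ i := by
          rw [← Nat.sub_add_cancel hi₁, pow_succ, Nat.add_sub_cancel]
          field_simp
      _ ≤ u i / p ^ i := div_le_div_of_nonneg_right (hu i hi₁ hiN) (by positivity)
  calc ∑ l ∈ range (N + 1), c l * u l
      = p ^ N * ∑ l ∈ range (N + 1), c l * (p ^ l / p ^ N) * (u l / p ^ l) :=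
        sum_mul_eq_pow_mul_sum_mul_div_pow hp.ne' c u N
    _ ≤ p ^ N * (-ε * (u N / p ^ N)) :=
        mul_le_mul_of_nonneg_left (sum_range_mul_le_of_sum_Icc_le (by simpa using hu₀) hx hc)
          (by positivity)
    _ = -ε * u N := by field_simp

theorem exists_sum_mul_ge_of_sum_Icc_nonneg {p : ℝ} (hp : 1 ≤ p) {c : ℕ → ℝ} {m N : ℕ}
    (hmN : m ≤ N) (hc : 0 ≤ ∑ l ∈ Icc m N, c l * (p ^ l / p ^ N)) (T : ℝ) :
    ∃ u : ℕ → ℝ, 1 ≤ u 0 ∧ (∀ i, 1 ≤ i → i ≤ N → p * u (i - 1) ≤ u i) ∧ T ≤ u N ∧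
      ∑ l ∈ range m, c l * p ^ l ≤ ∑ l ∈ range (N + 1), c l * u l := by
  set s := max 1 T
  have hs : 1 ≤ s := le_max_left 1 T
  let x : ℕ → ℝ := fun l => if l < m then 1 else s
  have hx : ∀ i, 1 ≤ i → x (i - 1) ≤ x i := fun i hi => by
    simp only [x]
    split_ifs <;> first | exact le_rfl | exact hs | omega
  refine ⟨fun l => p ^ l * x l, ?_, fun i hi₁ hiN => ?_, ?_, ?_⟩
  · simp only [x, pow_zero, one_mul]
    split_ifs <;> first | exact le_rfl | exact hs
  · calc p * (p ^ (i - 1) * x (i - 1)) = p ^ i * x (i - 1) := by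
          rw [← mul_assoc, ← pow_succ', Nat.sub_add_cancel hi₁]
      _ ≤ p ^ i * x i := mul_le_mul_of_nonneg_left (hx i hi₁) (by positivity)
  · simp only [x, if_neg hmN.not_gt]
    exact (le_max_right 1 T).trans (le_mul_of_one_le_left (by linarith) (one_le_pow₀ hp))
  · have htail : ∑ l ∈ Icc m N, c l * (p ^ l * x l) =
        s * p ^ N * ∑ l ∈ Icc m N, c l * (p ^ l / p ^ N) := by
      rw [mul_sum]
      refine sum_congr rfl fun l hl => ?_
      simp only [x, if_neg (mem_Icc.mp hl).1.not_gt]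
      field_simp
    rw [← sum_range_add_sum_Ico _ (by omega : m ≤ N + 1), Finset.Ico_add_one_right_eq_Icc]
    dsimp only
    rw [htail]
    have hhead : ∑ l ∈ range m, c l * (p ^ l * x l) = ∑ l ∈ range m, c l * p ^ l :=
      sum_congr rfl fun l hl => by simp only [x, if_pos (mem_range.mp hl), mul_one]
    rw [hhead, le_add_iff_nonneg_right]
    exact mul_nonneg (mul_nonneg (by linarith) (by positivity)) hc

theorem stmt16 (p n : ℕ) (hp : 2 ≤ p) (hn : 1 ≤ n) (c : ℕ → ℝ) :
    (∀ M : ℝ, ∃ T : ℝ, ∀ u : ℕ → ℝ,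
        1 ≤ u 0 → (∀ i, 1 ≤ i → i ≤ n - 1 → (p : ℝ) * u (i - 1) ≤ u i) →
        T ≤ u (n - 1) → ∑ m ∈ Finset.range n, c m * u m < M) ↔
    ∀ m ≤ n - 1,
      ∑ l ∈ Finset.Icc m (n - 1), c l * ((p : ℝ) ^ l / (p : ℝ) ^ (n - 1)) < 0 := by
  obtain ⟨N, rfl⟩ : ∃ N, n = N + 1 := ⟨n - 1, by omega⟩
  have hp₁ : (1 : ℝ) ≤ p := by exact_mod_cast one_le_two.trans hp
  simp only [Nat.add_sub_cancel]
  constructor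
  · intro h m hmN
    by_contra! hc
    obtain ⟨T, hT⟩ := h (∑ l ∈ range m, c l * (p : ℝ) ^ l)
    obtain ⟨u, hu₀, hu, huT, hsum⟩ := exists_sum_mul_ge_of_sum_Icc_nonneg hp₁ hmN hc T
    exact (hT u hu₀ hu huT).not_ge hsum
  · intro hc M
    obtain ⟨m₀, hm₀, hmax⟩ := (range (N + 1)).exists_max_image
      (fun m => ∑ l ∈ Icc m N, c l * ((p : ℝ) ^ l / (p : ℝ) ^ N)) nonempty_range_add_one
    set ε := -∑ l ∈ Icc m₀ N, c l * ((p : ℝ) ^ l / (p : ℝ) ^ N)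
    have hε : 0 < ε := neg_pos.mpr (hc m₀ (Nat.lt_succ_iff.mp (mem_range.mp hm₀)))
    have hcε : ∀ m ≤ N, ∑ l ∈ Icc m N, c l * ((p : ℝ) ^ l / (p : ℝ) ^ N) ≤ -ε := fun m hm => by
      rw [neg_neg]
      exact hmax m (mem_range.mpr (Nat.lt_succ_of_le hm))
    refine ⟨(1 - M) / ε, fun u hu₀ hu huT => ?_⟩
    calc ∑ l ∈ range (N + 1), c l * u l
        ≤ -ε * u N := sum_mul_le_neg_mul_of_sum_Icc_le (by positivity) (by linarith) hu hcε
      _ ≤ -ε * ((1 - M) / ε) := mul_le_mul_of_nonpos_left huT (by linarith)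
      _ = M - 1 := by field_simp; ring
      _ < M := by linarith
end

section
/- Let $p \geq 2$, $n \geq 1$, $t \geq p^{n-1}$ a real number, and $c_0,\dots,c_{n-1}$ real numbers. On the polytope $\tilde{\mathcal{U}}_t = \{u \in \mathbb{R}^n : u_0 \geq 1,\ u_i \geq p u_{i-1}\ (1 \leq i \leq n-1),\ u_{n-1} = t\}$, the maximum of the linear function $f(u) = \sum_m c_m u_m$ equals the maximum of $f$ over the $n$ points $v^{(m)} = (1, p, \dots, p^{m-1}, t/p^{n-1-m}, \dots, t/p, t)$ for $m = 0, 1, \dots, n-1$. -/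
/-!
Dividing the `i`-th coordinate by `p ^ i` turns the polytope into the set of nondecreasing
sequences `1 ≤ w₀ ≤ ⋯ ≤ w_{n-1} = T`, where `T = t / p ^ (n - 1)`, and the points `v^(m)` into
the step sequences equal to `1` before `m` and to `T` from `m` on. Writing a nondecreasing
sequence as `1` plus its nonnegative increments `δ_k` and summing by parts, a linear function
becomes `f(𝟙) + ∑ δ_k D_k` with `D_k` the tail sums of its coefficients, while on the `m`-th step
sequence it is `f(𝟙) + (∑ δ_k) D_m`; choosing `m` maximising `D_m` gives the claim.
-/

open Finset

def stepSeq (a b : ℝ) (m l : ℕ) : ℝ :=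
  if l < m then a else b

lemma stepSeq_monotone {a b : ℝ} (hab : a ≤ b) (m : ℕ) : Monotone (stepSeq a b m) := by
  intro l l' hl
  unfold stepSeq
  split_ifs <;> first | exact le_rfl | exact hab | omega

lemma sum_mul_stepSeq (d : ℕ → ℝ) (a b : ℝ) {m n : ℕ} (hmn : m ≤ n) :
    ∑ l ∈ range n, d l * stepSeq a b m l =
      a * ∑ l ∈ range n, d l + (b - a) * ∑ l ∈ Ico m n, d l := by
  have h_lt : ∑ l ∈ range m, d l * stepSeq a b m l = a * ∑ l ∈ range m, d l := by
    rw [mul_sum]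
    exact sum_congr rfl fun l hl => by rw [stepSeq, if_pos (mem_range.1 hl), mul_comm]
  have h_ge : ∑ l ∈ Ico m n, d l * stepSeq a b m l = b * ∑ l ∈ Ico m n, d l := by
    rw [mul_sum]
    exact sum_congr rfl fun l hl => by rw [stepSeq, if_neg (mem_Ico.1 hl).1.not_gt, mul_comm]
  rw [← sum_range_add_sum_Ico (fun l => d l * stepSeq a b m l) hmn,
    ← sum_range_add_sum_Ico d hmn, h_lt, h_ge]
  ring

lemma sum_mul_sum_range_succ (d δ : ℕ → ℝ) (n : ℕ) :
    ∑ l ∈ range n, d l * ∑ k ∈ range (l + 1), δ k =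
      ∑ k ∈ range n, δ k * ∑ l ∈ Ico k n, d l := by
  simp only [mul_sum, range_eq_Ico]
  rw [← sum_Ico_Ico_comm]
  simp only [mul_comm]

lemma exists_sum_mul_le_sum_mul {ι : Type*} {s : Finset ι} (hs : s.Nonempty) {δ : ι → ℝ}
    (hδ : ∀ i ∈ s, 0 ≤ δ i) (F : ι → ℝ) :
    ∃ j ∈ s, ∑ i ∈ s, δ i * F i ≤ (∑ i ∈ s, δ i) * F j := by
  obtain ⟨j, hj, hmax⟩ := s.exists_max_image F hs
  refine ⟨j, hj, ?_⟩
  rw [sum_mul]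
  exact sum_le_sum fun i hi => mul_le_mul_of_nonneg_left (hmax i hi) (hδ i hi)

/-- The sequence is `g 1, …, g n`; `g 0` is its lower bound. -/
theorem exists_sum_mul_le_sum_mul_stepSeq {n : ℕ} (hn : 0 < n) (d g : ℕ → ℝ)
    (hg : ∀ k < n, g k ≤ g (k + 1)) :
    ∃ m < n, ∑ l ∈ range n, d l * g (l + 1) ≤
      ∑ l ∈ range n, d l * stepSeq (g 0) (g n) m l := by
  set δ : ℕ → ℝ := fun k => g (k + 1) - g k
  have hg_eq : ∀ l, g (l + 1) = g 0 + ∑ k ∈ range (l + 1), δ k := fun l => by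
    rw [sum_range_sub]; ring
  obtain ⟨m, hm, hle⟩ := exists_sum_mul_le_sum_mul (nonempty_range_iff.2 hn.ne')
    (δ := δ) (fun k hk => sub_nonneg.2 (hg k (mem_range.1 hk))) fun k => ∑ l ∈ Ico k n, d l
  rw [mem_range] at hm
  refine ⟨m, hm, ?_⟩
  rw [sum_mul_stepSeq d _ _ hm.le, ← sum_range_sub g n]
  calc ∑ l ∈ range n, d l * g (l + 1)
      = g 0 * ∑ l ∈ range n, d l + ∑ k ∈ range n, δ k * ∑ l ∈ Ico k n, d l := by
        rw [← sum_mul_sum_range_succ, mul_sum, ← sum_add_distrib]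
        exact sum_congr rfl fun l _ => by rw [hg_eq]; ring
    _ ≤ _ := by linarith

lemma div_pow_le_div_pow_succ {p x y : ℝ} (hp : 0 < p) (h : p * x ≤ y) (j : ℕ) :
    x / p ^ j ≤ y / p ^ (j + 1) := by
  rw [pow_succ', ← div_div, div_le_div_iff_of_pos_right (pow_pos hp j), le_div_iff₀ hp]
  linarith

def chainPolytope (p t : ℝ) (n : ℕ) : Set (ℕ → ℝ) :=
  {u | 1 ≤ u 0 ∧ (∀ i, 1 ≤ i → i ≤ n - 1 → p * u (i - 1) ≤ u i) ∧ u (n - 1) = t}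

section ChainPolytope

variable {p t : ℝ} {n : ℕ}

lemma pow_mul_stepSeq_mem_chainPolytope (hp : 0 < p) (hn : 1 ≤ n) (ht : p ^ (n - 1) ≤ t)
    {m : ℕ} (hm : m < n) {w : ℕ → ℝ}
    (hw : ∀ l < n, w l = p ^ l * stepSeq 1 (t / p ^ (n - 1)) m l) :
    w ∈ chainPolytope p t n := by
  have hT : 1 ≤ t / p ^ (n - 1) := (one_le_div (pow_pos hp _)).2 ht
  refine ⟨?_, fun i hi1 hin => ?_, ?_⟩
  · rw [hw 0 (by omega), pow_zero, one_mul, stepSeq]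
    split_ifs <;> linarith
  · rw [hw (i - 1) (by omega), hw i (by omega), ← mul_assoc, ← pow_succ',
      Nat.sub_add_cancel hi1]
    exact mul_le_mul_of_nonneg_left (stepSeq_monotone hT m (Nat.sub_le i 1)) (by positivity)
  · rw [hw (n - 1) (by omega), stepSeq, if_neg (by omega)]
    exact mul_div_cancel₀ t (pow_pos hp _).ne'

lemma exists_sum_mul_le_sum_mul_pow_mul_stepSeq (hp : 0 < p) (hn : 1 ≤ n) (c : ℕ → ℝ)
    {u : ℕ → ℝ} (hu : u ∈ chainPolytope p t n) :
    ∃ m < n, ∑ l ∈ range n, c l * u l ≤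
      ∑ l ∈ range n, c l * (p ^ l * stepSeq 1 (t / p ^ (n - 1)) m l) := by
  obtain ⟨hu0, hu_succ, hu_last⟩ := hu
  set g : ℕ → ℝ := fun k => if k = 0 then 1 else u (k - 1) / p ^ (k - 1)
  have hg : ∀ k < n, g k ≤ g (k + 1) := by
    rintro (_ | k) hk
    · simpa [g] using hu0
    · simpa [g] using div_pow_le_div_pow_succ hp (hu_succ (k + 1) (by omega) (by omega)) k
  have hg0 : g 0 = 1 := if_pos rfl
  have hgn : g n = t / p ^ (n - 1) := by simp [g, hu_last, show n ≠ 0 by omega]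
  obtain ⟨m, hm, hle⟩ :=
    exists_sum_mul_le_sum_mul_stepSeq (by omega) (fun l => c l * p ^ l) g hg
  refine ⟨m, hm, ?_⟩
  calc ∑ l ∈ range n, c l * u l = ∑ l ∈ range n, c l * p ^ l * g (l + 1) :=
        sum_congr rfl fun l _ => by
          simp only [g, if_neg l.succ_ne_zero, Nat.add_sub_cancel]
          field_simp
    _ ≤ ∑ l ∈ range n, c l * p ^ l * stepSeq (g 0) (g n) m l := hle
    _ = _ := by simp only [hg0, hgn, mul_assoc]

end ChainPolytope

theorem stmt17 (p n : ℕ) (hp : 2 ≤ p) (hn : 1 ≤ n) (t : ℝ) (ht : (p : ℝ) ^ (n - 1) ≤ t)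
    (c : ℕ → ℝ)
    (Ut : Set (ℕ → ℝ))
    (hUt : Ut = {u : ℕ → ℝ | 1 ≤ u 0 ∧
      (∀ i, 1 ≤ i → i ≤ n - 1 → (p : ℝ) * u (i - 1) ≤ u i) ∧ u (n - 1) = t})
    (v : ℕ → ℕ → ℝ)
    (hv : ∀ m j, v m j = if j < m then (p : ℝ) ^ j else t / (p : ℝ) ^ (n - 1 - j)) :
    (∀ m < n, v m ∈ Ut) ∧
    ∀ u ∈ Ut, ∃ m < n,
      ∑ l ∈ Finset.range n, c l * u l ≤ ∑ l ∈ Finset.range n, c l * v m l := by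
  have hp0 : (0 : ℝ) < p := by exact_mod_cast (by omega : 0 < p)
  have hv_step : ∀ m, ∀ l < n, v m l = (p : ℝ) ^ l * stepSeq 1 (t / (p : ℝ) ^ (n - 1)) m l := by
    intro m l hl
    rw [hv, stepSeq]
    split_ifs
    · ring
    · rw [← pow_mul_pow_sub (p : ℝ) (show l ≤ n - 1 by omega)]
      field_simp
  subst hUt
  refine ⟨fun m hm => pow_mul_stepSeq_mem_chainPolytope hp0 hn ht hm (hv_step m),
    fun u hu => ?_⟩
  obtain ⟨m, hm, hle⟩ := exists_sum_mul_le_sum_mul_pow_mul_stepSeq hp0 hn c hu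
  exact ⟨m, hm, hle.trans_eq (sum_congr rfl fun l hl => by rw [hv_step m l (mem_range.1 hl)])⟩
end

section
/- Define for an increasing tuple $u = (u_0,\dots,u_{n-1})$ of nonnegative integers the lower jumps $l_i = u_0 + (u_1-u_0)p + \cdots + (u_i - u_{i-1})p^i$ and the function $v_d(u) = \sum \lceil (i_0 p^{n-1} l_0 + i_1 p^{n-2} l_1 + \cdots + i_{n-1} l_{n-1})/p^n \rceil$, summing over tuples $(i_0,\dots,i_{n-1}) \in \{0,\dots,p-1\}^n$ with $\sum_j i_j p^j < d$. Then for all nonnegative integers $q_0,\dots,q_{n-1}$ and $r_0,\dots,r_{n-1}$, $v_d(q_0 p^n + r_0, \dots, q_{n-1}p^n + r_{n-1}) = \sum_{m=0}^{n-1} D_d^{(m)} q_m + v_d(r_0,\dots,r_{n-1})$, where $D_d^{(m)} = p^{n-1}(S_d^{(m)} - (p-1)\sum_{l=m+1}^{n-1} p^{m-l}S_d^{(l)})$ with $S_d^{(l)}$ the sum of $(l+1)$-th base-$p$ digits of $0,\dots,d-1$. -/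
/-- Lower ramification jumps from upper jumps: `l_i = u_0 + ∑_{j=1}^i (u_j - u_{j-1}) p^j`. -/
def lowerJump (p : ℕ) (u : ℕ → ℤ) (i : ℕ) : ℤ :=
  u 0 + ∑ j ∈ Finset.Icc 1 i, (u j - u (j - 1)) * (p : ℤ) ^ j

/-- The v-function associated to an indecomposable representation of dimension `d`,
as a function of the tuple of (upper) ramification jumps. -/
def vFunc (p n d : ℕ) (u : ℕ → ℤ) : ℤ :=
  ∑ i ∈ Finset.univ.filter
      (fun i : Fin n → Fin p => ∑ j : Fin n, (i j : ℕ) * p ^ (j : ℕ) < d),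
    ⌈(∑ m : Fin n, (i m : ℚ) * (p : ℚ) ^ (n - 1 - (m : ℕ)) *
        (lowerJump p u (m : ℕ) : ℚ)) / (p : ℚ) ^ n⌉

open Finset

section LowerJump

variable (p : ℕ) (u : ℕ → ℤ)

lemma lowerJump_succ (m : ℕ) :
    lowerJump p u (m + 1) = lowerJump p u m + (u (m + 1) - u m) * p ^ (m + 1) := by
  rw [lowerJump, lowerJump, sum_Icc_succ_top (Nat.le_add_left 1 m), Nat.add_sub_cancel, add_assoc]

lemma lowerJump_eq_sub (m : ℕ) :
    lowerJump p u m = u m * p ^ m - (p - 1) * ∑ j ∈ range m, u j * p ^ j := by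
  induction m with
  | zero => simp [lowerJump]
  | succ m ih => rw [lowerJump_succ, ih, sum_range_succ]; ring

lemma lowerJump_mul_add (c : ℤ) (w : ℕ → ℤ) (m : ℕ) :
    lowerJump p (fun j => u j * c + w j) m = c * lowerJump p u m + lowerJump p w m := by
  have hsum : ∑ j ∈ range m, (u j * c + w j) * p ^ j
      = c * ∑ j ∈ range m, u j * p ^ j + ∑ j ∈ range m, w j * p ^ j := by
    rw [mul_sum, ← sum_add_distrib]
    exact sum_congr rfl fun _ _ => by ring
  rw [lowerJump_eq_sub, lowerJump_eq_sub, lowerJump_eq_sub, hsum]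
  ring

end LowerJump

lemma Icc_add_one_sub_one_eq_Ico (m n : ℕ) : Icc (m + 1) (n - 1) = Ico (m + 1) n := by
  ext; simp only [mem_Icc, mem_Ico]; omega

lemma sum_digitSum_mul_lowerJump_eq_sum_Dinv_mul (p n d : ℕ) (hp : 0 < p) (u : ℕ → ℤ) :
    ∑ m ∈ range n, (digitSum p d m : ℚ) * (p ^ (n - 1 - m) * lowerJump p u m)
      = ∑ m ∈ range n, Dinv p n d m * u m := by
  have hp0 : (p : ℚ) ≠ 0 := by positivity
  have hpow : ∀ m j : ℕ, m < n → (p : ℚ) ^ (n - 1 - m) * p ^ j = p ^ (n - 1) * p ^ ((j : ℤ) - m) := by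
    intro m j hm
    rw [← zpow_natCast, ← zpow_natCast, ← zpow_natCast, ← zpow_add₀ hp0, ← zpow_add₀ hp0]
    congr 1; omega
  set S : ℕ → ℚ := fun m => digitSum p d m
  have hterm : ∀ m ∈ range n, S m * (p ^ (n - 1 - m) * lowerJump p u m)
      = p ^ (n - 1) * S m * u m
        - (p - 1) * ∑ j ∈ range m, p ^ (n - 1) * (p ^ ((j : ℤ) - m) * S m) * u j := by
    intro m hm_mem
    have hm := mem_range.mp hm_mem
    rw [lowerJump_eq_sub]
    push_cast
    simp only [mul_sum, mul_sub]
    congr 1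
    · rw [← pow_sub_mul_pow (p : ℚ) (show m ≤ n - 1 by omega)]; ring
    · refine sum_congr rfl fun j _ => ?_
      linear_combination (p - 1) * S m * u j * hpow m j hm
  rw [sum_congr rfl hterm, sum_sub_distrib, ← mul_sum]
  simp only [range_eq_Ico]
  rw [← sum_Ico_Ico_comm' 0 n (fun j m => p ^ (n - 1) * (p ^ ((j : ℤ) - m) * S m) * u j),
    mul_sum, ← sum_sub_distrib]
  refine sum_congr rfl fun m _ => ?_
  rw [Dinv, Icc_add_one_sub_one_eq_Ico, ← sum_mul, ← mul_sum]
  ring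

def digitTuplesBelow (p n d : ℕ) : Finset (Fin n → Fin p) :=
  univ.filter fun i => ∑ j : Fin n, (i j : ℕ) * p ^ (j : ℕ) < d

lemma sum_digitTuplesBelow_apply {p n d : ℕ} (hd : d ≤ p ^ n) (m : Fin n) :
    ∑ i ∈ digitTuplesBelow p n d, (i m : ℕ) = digitSum p d m := by
  refine sum_nbij (fun i => (finFunctionFinEquiv i : ℕ)) ?_ ?_ ?_ ?_
  · intro i hi
    simp only [digitTuplesBelow, mem_filter, mem_univ, true_and] at hi
    simpa only [mem_range, finFunctionFinEquiv_apply] using hi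
  · intro i _ j _ h
    exact finFunctionFinEquiv.injective (Fin.ext h)
  · intro k hk
    have hk : k < d := mem_range.mp hk
    refine ⟨finFunctionFinEquiv.symm ⟨k, hk.trans_le hd⟩, ?_, by simp⟩
    rw [mem_coe, digitTuplesBelow, mem_filter, ← finFunctionFinEquiv_apply,
      Equiv.apply_symm_apply]
    exact ⟨mem_univ _, hk⟩
  · intro i _
    conv_lhs => rw [← finFunctionFinEquiv.symm_apply_apply i]
    rw [finFunctionFinEquiv_symm_apply_val]

lemma sum_digitTuplesBelow_sum_mul {R : Type*} [CommSemiring R] {p n d : ℕ} (hd : d ≤ p ^ n)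
    (f : ℕ → R) :
    ∑ i ∈ digitTuplesBelow p n d, ∑ m : Fin n, (i m : R) * f m
      = ∑ m ∈ range n, (digitSum p d m : R) * f m := by
  rw [sum_comm, ← Fin.sum_univ_eq_sum_range]
  refine sum_congr rfl fun m _ => ?_
  rw [← sum_mul, ← sum_digitTuplesBelow_apply hd, Nat.cast_sum]

lemma vFunc_mul_pow_add {p : ℕ} (n d : ℕ) (hp : 0 < p) (u w : ℕ → ℤ) :
    vFunc p n d (fun j => u j * p ^ n + w j)
      = ∑ i ∈ digitTuplesBelow p n d, ∑ m : Fin n, (i m : ℤ) * (p ^ (n - 1 - m) * lowerJump p u m)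
        + vFunc p n d w := by
  rw [vFunc, vFunc, digitTuplesBelow, ← sum_add_distrib]
  refine sum_congr rfl fun i _ => ?_
  rw [add_comm, ← Int.ceil_add_intCast]
  congr 1
  simp only [lowerJump_mul_add]
  push_cast
  field_simp
  rw [mul_sum, ← sum_add_distrib]
  exact sum_congr rfl fun m _ => by ring

theorem stmt18_general (p n d : ℕ) (hp : p.Prime) (hd2 : d ≤ p ^ n)
    (q r : ℕ → ℕ) :
    (vFunc p n d (fun j => (q j : ℤ) * (p : ℤ) ^ n + (r j : ℤ)) : ℚ) =
      (∑ m ∈ Finset.range n, Dinv p n d m * (q m : ℚ)) +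
        (vFunc p n d (fun j => (r j : ℤ)) : ℚ) := by
  rw [vFunc_mul_pow_add n d hp.pos (fun j => (q j : ℤ)), sum_digitTuplesBelow_sum_mul hd2
      (fun m => (p : ℤ) ^ (n - 1 - m) * lowerJump p (fun j => (q j : ℤ)) m),
    Int.cast_add]
  push_cast
  rw [sum_digitSum_mul_lowerJump_eq_sum_Dinv_mul p n d hp.pos]
  simp only [Int.cast_natCast]

theorem stmt18 (p n d : ℕ) (hp : p.Prime) (hn : 1 ≤ n) (hd1 : 1 ≤ d) (hd2 : d ≤ p ^ n)
    (q r : ℕ → ℕ) :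
    (vFunc p n d (fun j => (q j : ℤ) * (p : ℤ) ^ n + (r j : ℤ)) : ℚ) =
      (∑ m ∈ Finset.range n, Dinv p n d m * (q m : ℚ)) +
        (vFunc p n d (fun j => (r j : ℤ)) : ℚ) :=
  stmt18_general p n d hp hd2 q r
end

section
/- Let $p \geq 2$, $n \geq 2$, and $d = p - 1 + p^{n-1}$. Then for every $0 \leq m \leq n-2$, $1 - \frac{1}{p^{n-m}} - \sum_{l=m}^{n-1}\frac{D_d^{(l)}}{p^{2n-1-l}} \leq 1 - \frac{D_d^{(n-2)}}{p^{n+1}} - \frac{D_d^{(n-1)}}{p^n}$, where $D_d^{(l)} = p^{n-1}(S_d^{(l)} - (p-1)\sum_{j=l+1}^{n-1}p^{l-j}S_d^{(j)})$ and each $D_d^{(l)} \geq 0$. -/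
/-! Write `d = p ^ (n - 1) + (p - 1)`. A full block `[0, p ^ k)` has digit sum
`p ^ (k - 1) * (0 + ⋯ + (p - 1))` in every position `l < k`, and the `p - 1` extra numbers add
nothing in positions `1 ≤ l ≤ n - 2` and one each in position `n - 1`. Hence `S^{(l)}` is
non-increasing in `l ≤ n - 1`. Since `D^{(l)} = p^{n-1} (S^{(l)} - S^{(l+1)}) + D^{(l+1)} / p` and
`D^{(n-1)} = p^{n-1} S^{(n-1)}`, downward induction gives `D^{(l)} ≥ 0`, and the inequality only
drops the nonnegative terms `1 / p^{n-m}` and `D^{(l)} / p^{2n-1-l}` for `m ≤ l < n - 2`. -/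

open Finset

theorem Finset.sum_range_mul_eq_sum_sum {M : Type*} [AddCommMonoid M] (f : ℕ → M) (a b : ℕ) :
    ∑ i ∈ range (a * b), f i = ∑ q ∈ range a, ∑ r ∈ range b, f (q * b + r) := by
  induction a with
  | zero => simp
  | succ a ih => rw [Nat.succ_mul, sum_range_add, ih, sum_range_succ]

section Digits

variable {p : ℕ}

theorem digit_mul_pow_succ_add (hp : 0 < p) (q r l : ℕ) :
    (q * p ^ (l + 1) + r) / p ^ l % p = r / p ^ l % p := by
  rw [pow_succ, show q * (p ^ l * p) = p ^ l * (q * p) by ring,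
    Nat.mul_add_div (pow_pos hp l), Nat.mul_add_mod_self_right]

theorem digitSum_mono_left {d d' : ℕ} (h : d ≤ d') (l : ℕ) : digitSum p d l ≤ digitSum p d' l :=
  sum_le_sum_of_subset (range_subset_range.mpr h)

theorem digitSum_add (a b l : ℕ) :
    digitSum p (a + b) l = digitSum p a l + ∑ j ∈ range b, (a + j) / p ^ l % p :=
  sum_range_add _ a b

theorem digitSum_pow_succ (hp : 0 < p) (l : ℕ) :
    digitSum p (p ^ (l + 1)) l = p ^ l * ∑ s ∈ range p, s := by
  have hdigit : ∀ s ∈ range p, ∀ t ∈ range (p ^ l), (s * p ^ l + t) / p ^ l % p = s := by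
    intro s hs t ht
    rw [mul_comm, Nat.mul_add_div (pow_pos hp l), Nat.div_eq_of_lt (mem_range.mp ht), add_zero,
      Nat.mod_eq_of_lt (mem_range.mp hs)]
  rw [digitSum, pow_succ', sum_range_mul_eq_sum_sum, mul_sum]
  exact sum_congr rfl fun s hs => by simp [sum_congr rfl (hdigit s hs), mul_comm]

theorem digitSum_mul_pow_succ (hp : 0 < p) (q l : ℕ) :
    digitSum p (q * p ^ (l + 1)) l = q * digitSum p (p ^ (l + 1)) l := by
  simp only [digitSum, sum_range_mul_eq_sum_sum, digit_mul_pow_succ_add hp, sum_const, card_range,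
    smul_eq_mul]

theorem digitSum_pow_of_lt (hp : 0 < p) {k l : ℕ} (hlk : l < k) :
    digitSum p (p ^ k) l = p ^ (k - 1) * ∑ s ∈ range p, s := by
  rw [show p ^ k = p ^ (k - l - 1) * p ^ (l + 1) by rw [← pow_add]; congr 1; omega,
    digitSum_mul_pow_succ hp, digitSum_pow_succ hp, ← mul_assoc, ← pow_add]
  congr 2
  omega

theorem digitSum_pow_add_of_lt (hp : 0 < p) {k l r : ℕ} (hlk : l < k) (hr : r ≤ p ^ l) :
    digitSum p (p ^ k + r) l = p ^ (k - 1) * ∑ s ∈ range p, s := by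
  have htail : ∀ j ∈ range r, (p ^ k + j) / p ^ l % p = 0 := by
    intro j hj
    rw [show p ^ k = p ^ l * (p ^ (k - l - 1) * p) by rw [← pow_succ, ← pow_add]; congr 1; omega,
      Nat.mul_add_div (pow_pos hp l), Nat.div_eq_of_lt (by simp at hj; omega), add_zero,
      Nat.mul_mod_left]
  rw [digitSum_add, sum_congr rfl htail, sum_const_zero, add_zero, digitSum_pow_of_lt hp hlk]

theorem digitSum_pow_add_self (hp : 1 < p) {k r : ℕ} (hr : r ≤ p ^ k) :
    digitSum p (p ^ k + r) k = r := by
  have hpk : 0 < p ^ k := pow_pos (by omega) k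
  have hhead : ∀ i ∈ range (p ^ k), i / p ^ k % p = 0 := fun i hi => by
    rw [Nat.div_eq_of_lt (mem_range.mp hi), Nat.zero_mod]
  have htail : ∀ j ∈ range r, (p ^ k + j) / p ^ k % p = 1 := by
    intro j hj
    rw [Nat.add_div_left _ hpk, Nat.div_eq_of_lt (by simp at hj; omega), Nat.mod_eq_of_lt hp]
  rw [digitSum_add, digitSum, sum_congr rfl hhead, sum_congr rfl htail]
  simp

end Digits

section Dinv

variable {p n d : ℕ}

theorem digitSum_succ_le_of_eq_sub_one_add_pow (hp : 1 < p) (hn : 2 ≤ n)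
    (hd : d = p - 1 + p ^ (n - 1)) {l : ℕ} (hl : l + 1 ≤ n - 1) :
    digitSum p d (l + 1) ≤ digitSum p d l := by
  have hp0 : 0 < p := by omega
  have hd' : d = p ^ (n - 1) + (p - 1) := by omega
  have hr : ∀ j ≥ 1, p - 1 ≤ p ^ j := fun j hj =>
    (Nat.sub_le p 1).trans (Nat.le_self_pow (by omega) p)
  have hupper : digitSum p d (l + 1) ≤ p ^ (n - 2) * ∑ s ∈ range p, s := by
    rcases hl.lt_or_eq with hlt | heq
    · rw [hd', digitSum_pow_add_of_lt hp0 hlt (hr _ (by omega))]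
      rfl
    · rw [hd', heq, digitSum_pow_add_self hp (hr _ (by omega))]
      calc p - 1 ≤ ∑ s ∈ range p, s := single_le_sum (f := id) (by simp) (mem_range.mpr (by omega))
        _ ≤ p ^ (n - 2) * ∑ s ∈ range p, s := Nat.le_mul_of_pos_left _ (pow_pos hp0 _)
  have hlower : p ^ (n - 2) * ∑ s ∈ range p, s ≤ digitSum p d l := by
    calc p ^ (n - 2) * ∑ s ∈ range p, s = digitSum p (p ^ (n - 1)) l := by
          rw [digitSum_pow_of_lt hp0 (by omega)]; rfl
      _ ≤ digitSum p d l := digitSum_mono_left (by omega) l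
  exact hupper.trans hlower

theorem Dinv_eq_add_Dinv_succ_div (hp : p ≠ 0) {m : ℕ} (hm : m + 1 ≤ n - 1) :
    Dinv p n d m = (p : ℚ) ^ (n - 1) * ((digitSum p d m : ℚ) - digitSum p d (m + 1))
      + Dinv p n d (m + 1) / p := by
  have hp' : (p : ℚ) ≠ 0 := by exact_mod_cast hp
  have hshift : ∀ l ∈ Icc (m + 1 + 1) (n - 1),
      (p : ℚ) ^ ((m : ℤ) - l) * digitSum p d l
        = (p : ℚ) ^ (((m + 1 : ℕ) : ℤ) - l) * digitSum p d l / p := by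
    intro l _
    rw [show ((m : ℤ) - l) = ((m + 1 : ℕ) : ℤ) - l - 1 by push_cast; ring, zpow_sub_one₀ hp']
    ring
  unfold Dinv
  rw [← insert_Icc_add_one_left_eq_Icc hm, sum_insert (by simp), sum_congr rfl hshift, ← sum_div,
    show ((m : ℤ) - ((m + 1 : ℕ) : ℤ)) = -1 by push_cast; ring, zpow_neg_one]
  field_simp
  ring

theorem Dinv_nonneg_of_digitSum_antitone (hp : p ≠ 0)
    (hS : ∀ l, l + 1 ≤ n - 1 → digitSum p d (l + 1) ≤ digitSum p d l) {l : ℕ} (hl : l ≤ n - 1) :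
    0 ≤ Dinv p n d l := by
  induction hl using Nat.decreasingInduction with
  | self =>
    unfold Dinv
    simp only [Icc_eq_empty_of_lt (Nat.lt_succ_self _), sum_empty, mul_zero, sub_zero]
    positivity
  | of_succ k hk ih =>
    have hSk : (digitSum p d (k + 1) : ℚ) ≤ digitSum p d k := by exact_mod_cast hS k hk
    rw [Dinv_eq_add_Dinv_succ_div hp hk]
    exact add_nonneg (mul_nonneg (by positivity) (sub_nonneg.mpr hSk))
      (div_nonneg ih (by positivity))

end Dinv

theorem stmt19 (p n d : ℕ) (hp : p.Prime) (hn : 2 ≤ n) (hd : d = p - 1 + p ^ (n - 1)) :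
    (∀ l ≤ n - 1, 0 ≤ Dinv p n d l) ∧
    ∀ m ≤ n - 2,
      1 - 1 / (p : ℚ) ^ (n - m) -
          ∑ l ∈ Finset.Icc m (n - 1), Dinv p n d l / (p : ℚ) ^ (2 * n - 1 - l) ≤
        1 - Dinv p n d (n - 2) / (p : ℚ) ^ (n + 1) - Dinv p n d (n - 1) / (p : ℚ) ^ n := by
  have hDinv : ∀ l ≤ n - 1, 0 ≤ Dinv p n d l := fun l =>
    Dinv_nonneg_of_digitSum_antitone hp.ne_zero fun _ =>
      digitSum_succ_le_of_eq_sub_one_add_pow hp.one_lt hn hd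
  refine ⟨hDinv, fun m hm => ?_⟩
  have hpair : Dinv p n d (n - 2) / (p : ℚ) ^ (n + 1) + Dinv p n d (n - 1) / (p : ℚ) ^ n
      = ∑ l ∈ {n - 2, n - 1}, Dinv p n d l / (p : ℚ) ^ (2 * n - 1 - l) := by
    rw [sum_pair (by omega), show 2 * n - 1 - (n - 2) = n + 1 by omega,
      show 2 * n - 1 - (n - 1) = n by omega]
  have hle : ∑ l ∈ {n - 2, n - 1}, Dinv p n d l / (p : ℚ) ^ (2 * n - 1 - l)
      ≤ ∑ l ∈ Icc m (n - 1), Dinv p n d l / (p : ℚ) ^ (2 * n - 1 - l) := by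
    refine sum_le_sum_of_subset_of_nonneg (fun l hl => ?_) fun l hl _ => ?_
    · simp only [mem_insert, mem_singleton] at hl
      rw [mem_Icc]
      omega
    · exact div_nonneg (hDinv l (mem_Icc.mp hl).2) (by positivity)
  have hpow : (0 : ℚ) ≤ 1 / (p : ℚ) ^ (n - m) := by positivity
  linarith
end
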